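/- arXiv:2401.12151 — 2 statements merged into one kernel-verified Lean document; each statement's English description precedes it below -/
import Mathlib

section
/- Let θ ∈ ℝ^N be a nonnegative vector, L+S a positive integer, and ρ > 0 with Σ_n θ[n] = (L+S)·ρ. There exist a finite G, a nonnegative vector γ ∈ ℝ^G with Σ_g γ[g] = ρ, and a {0,1}-valued G×N matrix μ with exactly L+S ones per row, such that θ = γ·μ, if and only if θ[n] ≤ ρ for all n ∈ [N]. -/
/-!
Necessity: each θ n is a sum of some of the weights γ g, hence at most their total ρ.

Sufficiency peels off one row at a time; write K = L + S. Call a coordinate fractional if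
0 < θ n < ρ. If none is, θ = ρ • 1_E for the set E where θ n = ρ, and the sum condition forces
#E = K. Otherwise the sum condition gives #{θ n = ρ} ≤ K ≤ #{θ n > 0}, so some K-set A lies
between these two sets. Subtracting ε • 1_A from θ and ε from ρ, with ε as large as 0 ≤ θ ≤ ρ
allows, preserves all hypotheses and turns at least one fractional coordinate into 0 or into
the new ρ.
-/

open Finset

variable {ι : Type*} [Fintype ι]

def IsBinaryDivision (K : ℕ) (θ : ι → ℝ) (ρ : ℝ) : Prop :=
  ∃ (G : ℕ) (γ : Fin G → ℝ) (μ : Fin G → ι → ℝ),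
    (∀ g, 0 ≤ γ g) ∧ ∑ g, γ g = ρ ∧ (∀ g n, μ g n = 0 ∨ μ g n = 1) ∧
      (∀ g, ∑ n, μ g n = K) ∧ ∀ n, θ n = ∑ g, γ g * μ g n

noncomputable def fractionalCoords (θ : ι → ℝ) (ρ : ℝ) : Finset ι :=
  {n | 0 < θ n ∧ θ n < ρ}

variable {K : ℕ} {θ : ι → ℝ} {ρ : ℝ}

namespace IsBinaryDivision

theorem le (h : IsBinaryDivision K θ ρ) (n : ι) : θ n ≤ ρ := by
  obtain ⟨G, γ, μ, hγ, hγρ, hμ, -, hθ⟩ := h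
  rw [hθ n, ← hγρ]
  refine sum_le_sum fun g _ => ?_
  rcases hμ g n with h | h <;> simp [h, hγ g]

theorem zero : IsBinaryDivision (ι := ι) K 0 0 :=
  ⟨0, Fin.elim0, Fin.elim0, fun g => g.elim0, by simp, fun g => g.elim0, fun g => g.elim0,
    by simp⟩

theorem add_indicator (h : IsBinaryDivision K θ ρ) {A : Finset ι} (hA : #A = K) {ε : ℝ}
    (hε : 0 ≤ ε) : IsBinaryDivision K (θ + (A : Set ι).indicator fun _ => ε) (ρ + ε) := by
  classical
  obtain ⟨G, γ, μ, hγ, hγρ, hμ, hrow, hθ⟩ := h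
  refine ⟨G + 1, Fin.cons ε γ, Fin.cons (fun n => if n ∈ A then 1 else 0) μ,
    Fin.cases hε hγ, ?total, fun g n => Fin.cases ?binary (fun g => hμ g n) g,
    Fin.cases ?row hrow, fun n => ?decomp⟩
  case total => rw [Fin.sum_cons, hγρ, add_comm]
  case binary => by_cases hn : n ∈ A <;> simp [hn]
  case row => simp [hA]
  case decomp => by_cases hn : n ∈ A <;> simp [Fin.sum_univ_succ, hθ n, hn, add_comm]

end IsBinaryDivision

theorem isBinaryDivision_of_fractionalCoords_eq_empty (hρ : 0 < ρ) (hθ0 : ∀ n, 0 ≤ θ n)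
    (hθρ : ∀ n, θ n ≤ ρ) (hsum : ∑ n, θ n = K * ρ) (h : fractionalCoords θ ρ = ∅) :
    IsBinaryDivision K θ ρ := by
  classical
  set E : Finset ι := {n | θ n = ρ}
  have hθE : θ = (E : Set ι).indicator fun _ => ρ := by
    ext n
    have hn : ¬(0 < θ n ∧ θ n < ρ) := by simpa [fractionalCoords] using congr(n ∈ $h)
    by_cases hnE : θ n = ρ
    · simp [E, hnE]
    · rw [Set.indicator_of_notMem (by simpa [E] using hnE)]
      exact le_antisymm (not_lt.1 fun h₀ => hn ⟨h₀, (hθρ n).lt_of_ne hnE⟩) (hθ0 n)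
  have hEK : #E = K := by
    have : (#E : ℝ) * ρ = K * ρ := by
      rw [← hsum, hθE, sum_indicator_subset _ (subset_univ E)]
      simp
    exact_mod_cast mul_right_cancel₀ hρ.ne' this
  simpa [← hθE] using IsBinaryDivision.zero.add_indicator hEK hρ.le

theorem exists_card_eq_forall_pos_forall_lt (hρ : 0 < ρ) (hθ0 : ∀ n, 0 ≤ θ n)
    (hθρ : ∀ n, θ n ≤ ρ) (hsum : ∑ n, θ n = K * ρ) :
    ∃ A : Finset ι, #A = K ∧ (∀ n ∈ A, 0 < θ n) ∧ ∀ n ∉ A, θ n < ρ := by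
  classical
  set E : Finset ι := {n | θ n = ρ}
  set P : Finset ι := {n | 0 < θ n}
  have hEP : E ⊆ P := fun n hn => by
    simp only [E, P, mem_filter, mem_univ, true_and] at hn ⊢
    exact hn ▸ hρ
  have hEK : #E ≤ K := by
    have : #E • ρ ≤ K * ρ := calc
      #E • ρ ≤ ∑ n ∈ E, θ n := card_nsmul_le_sum _ _ _ fun n hn => by simp [E] at hn; exact hn.ge
      _ ≤ ∑ n, θ n := sum_le_sum_of_subset_of_nonneg (subset_univ E) fun n _ _ => hθ0 n
      _ = K * ρ := hsum
    rw [nsmul_eq_mul] at this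
    exact_mod_cast le_of_mul_le_mul_right this hρ
  have hKP : K ≤ #P := by
    have : K * ρ ≤ #P • ρ := calc
      K * ρ = ∑ n, θ n := hsum.symm
      _ = ∑ n ∈ P, θ n := (sum_filter_of_ne fun n _ hn => (hθ0 n).lt_of_ne' hn).symm
      _ ≤ #P • ρ := sum_le_card_nsmul _ _ _ fun n _ => hθρ n
    rw [nsmul_eq_mul] at this
    exact_mod_cast le_of_mul_le_mul_right this hρ
  obtain ⟨A, hEA, hAP, hAK⟩ := exists_subsuperset_card_eq hEP hEK hKP
  refine ⟨A, hAK, fun n hn => by simpa [P] using hAP hn, fun n hn => ?_⟩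
  exact (hθρ n).lt_of_ne fun h => hn (hEA (by simp [E, h]))

theorem fractionalCoords_sub_indicator_subset (A : Finset ι) {ε : ℝ} (hε : 0 ≤ ε) :
    fractionalCoords (θ - (A : Set ι).indicator fun _ => ε) (ρ - ε) ⊆ fractionalCoords θ ρ := by
  intro n
  by_cases hn : n ∈ A <;> simp [fractionalCoords, hn] <;> intro h₀ h₁ <;> constructor <;> linarith

theorem exists_sub_indicator_card_lt {A : Finset ι} (hA0 : ∀ n ∈ A, 0 < θ n)
    (hAρ : ∀ n ∉ A, θ n < ρ) (hθ0 : ∀ n, 0 ≤ θ n) (hθρ : ∀ n, θ n ≤ ρ)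
    (hfrac : (fractionalCoords θ ρ).Nonempty) :
    ∃ ε, 0 < ε ∧ ε < ρ ∧ (∀ n, 0 ≤ (θ - (A : Set ι).indicator fun _ => ε) n) ∧
      (∀ n, (θ - (A : Set ι).indicator fun _ => ε) n ≤ ρ - ε) ∧
      #(fractionalCoords (θ - (A : Set ι).indicator fun _ => ε) (ρ - ε)) <
        #(fractionalCoords θ ρ) := by
  classical
  obtain ⟨b, hb⟩ := hfrac
  let gap n := if n ∈ A then θ n else ρ - θ n
  obtain ⟨n₀, -, hn₀⟩ := exists_min_image univ gap ⟨b, mem_univ b⟩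
  have hgap_pos (n : ι) : 0 < gap n := by
    by_cases hn : n ∈ A <;> simp [gap, hn, hA0, hAρ]
  have hgap_lt (n : ι) (hn : n ∈ fractionalCoords θ ρ) : gap n < ρ := by
    simp only [fractionalCoords, mem_filter, mem_univ, true_and] at hn
    by_cases hnA : n ∈ A <;> simp only [gap, hnA, if_true, if_false] <;> linarith
  have hmem_of_gap (n : ι) (h₀ : 0 < gap n) (hlt : gap n < ρ) : n ∈ fractionalCoords θ ρ := by
    simp only [fractionalCoords, mem_filter, mem_univ, true_and]
    by_cases hnA : n ∈ A <;> simp only [gap, hnA, if_true, if_false] at h₀ hlt <;>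
      constructor <;> linarith
  set ε := gap n₀
  have hερ : ε < ρ := (hn₀ b (mem_univ b)).trans_lt (hgap_lt b hb)
  refine ⟨ε, hgap_pos n₀, hερ, fun n => ?_, fun n => ?_, card_lt_card ?_⟩
  · have := hn₀ n (mem_univ n)
    by_cases hn : n ∈ A <;> simp [gap, hn] at this ⊢ <;> linarith [hθ0 n]
  · have := hn₀ n (mem_univ n)
    by_cases hn : n ∈ A <;> simp [gap, hn] at this ⊢ <;> linarith [hθρ n]
  refine (ssubset_iff_of_subset (fractionalCoords_sub_indicator_subset A (hgap_pos n₀).le)).2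
    ⟨n₀, hmem_of_gap n₀ (hgap_pos n₀) hερ, ?_⟩
  by_cases hn : n₀ ∈ A <;> simp [fractionalCoords, gap, hn]

theorem isBinaryDivision_of_le (hρ : 0 < ρ) (hθ0 : ∀ n, 0 ≤ θ n) (hθρ : ∀ n, θ n ≤ ρ)
    (hsum : ∑ n, θ n = K * ρ) : IsBinaryDivision K θ ρ := by
  induction hc : #(fractionalCoords θ ρ) using Nat.strong_induction_on generalizing θ ρ with
  | _ c ih =>
  obtain hfrac | hfrac := (fractionalCoords θ ρ).eq_empty_or_nonempty
  · exact isBinaryDivision_of_fractionalCoords_eq_empty hρ hθ0 hθρ hsum hfrac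
  obtain ⟨A, hAK, hA0, hAρ⟩ := exists_card_eq_forall_pos_forall_lt hρ hθ0 hθρ hsum
  obtain ⟨ε, hε0, hερ, hθ'0, hθ'ρ, hlt⟩ := exists_sub_indicator_card_lt hA0 hAρ hθ0 hθρ hfrac
  have hsum' : ∑ n, (θ - (A : Set ι).indicator fun _ => ε) n = K * (ρ - ε) := by
    simp only [Pi.sub_apply]
    rw [sum_sub_distrib, hsum, sum_indicator_subset _ (subset_univ A)]
    simp [hAK, mul_sub]
  simpa using (ih _ (hc ▸ hlt) (sub_pos.2 hερ) hθ'0 hθ'ρ hsum' rfl).add_indicator hAK hε0.le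

theorem stmt2_general (L S N : ℕ)
    (θ : Fin N → ℝ) (hθ0 : ∀ n, 0 ≤ θ n)
    (ρ : ℝ) (hρ : 0 < ρ) (hsum : ∑ n, θ n = (L + S : ℝ) * ρ) :
    (∃ (G : ℕ) (γ : Fin G → ℝ) (μ : Fin G → Fin N → ℝ),
      (∀ g, 0 ≤ γ g) ∧ (∑ g, γ g = ρ) ∧
      (∀ g n, μ g n = 0 ∨ μ g n = 1) ∧
      (∀ g, ∑ n, μ g n = (L + S : ℝ)) ∧
      (∀ n, θ n = ∑ g, γ g * μ g n))
    ↔ (∀ n, θ n ≤ ρ) := by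
  have key : IsBinaryDivision (L + S) θ ρ ↔ ∀ n, θ n ≤ ρ :=
    ⟨IsBinaryDivision.le, fun hθρ => isBinaryDivision_of_le hρ hθ0 hθρ (by push_cast; exact hsum)⟩
  simpa only [IsBinaryDivision, Nat.cast_add] using key

/-- existence condition for the Binary-(θ,ρ)-Division Problem:
a decomposition θ = γ·μ with γ ≥ 0 summing to ρ and μ a {0,1}-matrix having
exactly L+S ones per row exists iff θ[n] ≤ ρ for all n. -/
theorem stmt2 (L S N : ℕ) (hLS : 0 < L + S)
    (θ : Fin N → ℝ) (hθ0 : ∀ n, 0 ≤ θ n)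
    (ρ : ℝ) (hρ : 0 < ρ) (hsum : ∑ n, θ n = (L + S : ℝ) * ρ) :
    (∃ (G : ℕ) (γ : Fin G → ℝ) (μ : Fin G → Fin N → ℝ),
      (∀ g, 0 ≤ γ g) ∧ (∑ g, γ g = ρ) ∧
      (∀ g n, μ g n = 0 ∨ μ g n = 1) ∧
      (∀ g, ∑ n, μ g n = (L + S : ℝ)) ∧
      (∀ n, θ n = ∑ g, γ g * μ g n))
    ↔ (∀ n, θ n ≤ ρ) :=
  stmt2_general L S N θ hθ0 ρ hρ hsum
end

section
/- If θ* solves the (L+S, s, 𝟏)-Load Problem and (γ*, μ*) solves the Binary-(θ*,1)-Division Problem, then any USCTEC scheme whose partitioning vector is γ* and whose load division matrix is μ* achieves computation time max_{n∈𝒩_t} θ*[n]/s[n], which is the minimum computation time over all feasible USCTEC schemes for speed realization s under storage constraint e = 𝟏. -/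
open Finset

/-- if θ* solves the (L+S,s,𝟏)-Load Problem and (γ*,μ*) solves
the Binary-(θ*,1)-Division Problem, then a USCTEC scheme with partitioning
vector γ* and load division matrix μ* achieves computation time
max_{n∈𝒩_t} θ*[n]/s[n], which is minimal among all feasible USCTEC schemes
for speed realization s with storage constraint e = 𝟏. -/
theorem stmt17 (L S N : ℕ) (hLS : 0 < L + S)
    (s : Fin N → ℝ)
    (𝒩 : Finset (Fin N)) (h𝒩def : 𝒩 = Finset.univ.filter (fun n => 0 < s n))
    (h𝒩 : 𝒩.Nonempty)
    (θstar : Fin N → ℝ)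
    -- θ* is feasible for the (L+S, s, 𝟏)-Load Problem
    (hfeas : (∑ n ∈ 𝒩, θstar n = (L + S : ℝ)) ∧
      (∀ n ∈ 𝒩, 0 ≤ θstar n ∧ θstar n ≤ 1) ∧ (∀ n ∉ 𝒩, θstar n = 0))
    -- θ* is optimal for the (L+S, s, 𝟏)-Load Problem
    (hopt : ∀ θ : Fin N → ℝ,
      (∑ n ∈ 𝒩, θ n = (L + S : ℝ)) → (∀ n ∈ 𝒩, 0 ≤ θ n ∧ θ n ≤ 1) →
      (∀ n ∉ 𝒩, θ n = 0) →
      𝒩.sup' h𝒩 (fun n => θstar n / s n) ≤ 𝒩.sup' h𝒩 (fun n => θ n / s n))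
    -- (γ*, μ*) solves the Binary-(θ*,1)-Division Problem
    (G : ℕ) (γstar : Fin G → ℝ) (μstar : Fin G → Fin N → ℝ)
    (hγ : (∀ g, 0 ≤ γstar g) ∧ ∑ g, γstar g = 1)
    (hμ : (∀ g n, μstar g n = 0 ∨ μstar g n = 1) ∧
      (∀ g, ∑ n, μstar g n = (L + S : ℝ)) ∧ (∀ g, ∀ n ∉ 𝒩, μstar g n = 0))
    (hprod : ∀ n, ∑ g, γstar g * μstar g n = θstar n) :
    -- the scheme (γ*, μ*) achieves computation time max_{n∈𝒩} θ*[n]/s[n]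
    (𝒩.sup' h𝒩 (fun n => (∑ g, γstar g * μstar g n) / s n)
        = 𝒩.sup' h𝒩 (fun n => θstar n / s n)) ∧
    -- and this is minimal among all feasible USCTEC schemes (e = 𝟏)
    (∀ (G' : ℕ) (γ : Fin G' → ℝ) (μ : Fin G' → Fin N → ℝ),
      (∀ g, 0 ≤ γ g) → (∑ g, γ g = 1) →
      (∀ g n, 0 ≤ μ g n ∧ μ g n ≤ 1) →
      (∀ g, ∑ n, μ g n = (L + S : ℝ)) →
      (∀ g, ∀ n ∉ 𝒩, μ g n = 0) →
      𝒩.sup' h𝒩 (fun n => θstar n / s n)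
        ≤ 𝒩.sup' h𝒩 (fun n => (∑ g, γ g * μ g n) / s n)) := by
  constructor
  · exact Finset.sup'_congr h𝒩 rfl (fun n _ => by rw [hprod])
  · intro G' γ μ hγ0 hγ1 hμ01 hμsum hμ0
    apply hopt
    · rw [Finset.sum_comm]
      have : ∀ g, ∑ n ∈ 𝒩, γ g * μ g n = γ g * (L + S : ℝ) := by
        intro g
        rw [← Finset.mul_sum]
        congr 1
        rw [← hμsum g]
        exact Finset.sum_subset (Finset.subset_univ _) (fun n _ hn => hμ0 g n hn)
      rw [Finset.sum_congr rfl (fun g _ => this g), ← Finset.sum_mul, hγ1, one_mul]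
    · intro n _
      constructor
      · exact Finset.sum_nonneg fun g _ => mul_nonneg (hγ0 g) (hμ01 g n).1
      · calc ∑ g, γ g * μ g n ≤ ∑ g, γ g := by
              apply Finset.sum_le_sum
              intro g _
              exact mul_le_of_le_one_right (hγ0 g) (hμ01 g n).2
          _ = 1 := hγ1
    · intro n hn
      exact Finset.sum_eq_zero fun g _ => by rw [hμ0 g n hn, mul_zero]
end
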